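/- In Y_{p+M|q+N}(s_1 s), the subalgebra generated by { t_{ij}^{(r)} : 1 ≤ i,j ≤ p+q, r ≥ 1 } supercommutes with the subalgebra generated by the coefficients of the entries t'_{L+i, L+j}(u) (1 ≤ i,j ≤ M+N) of the inverse matrix T(u)^{-1}, where L = p+q. In particular, the northwestern L×L corner subalgebra of Y_{p+M|q+N} supercommutes with ψ_L(Y_{M|N}(s)). -/

import Mathlib

noncomputable section

namespace SuperYangian

/-- The sign `(-1)^x` for `x : ZMod 2`. -/
def sgn (x : ZMod 2) : ℂ := if x = 0 then 1 else -1

variable {A : Type*}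

/-- The supercommutator `[x, y] = x*y - ε • (y*x)` with prescribed sign `ε`
(for homogeneous `x`, `y` one takes `ε = (-1)^{|x||y|}`). -/
def scomm [Ring A] [Algebra ℂ A] (ε : ℂ) (x y : A) : A := x * y - ε • (y * x)

/-- `off μ a = μ 0 + ⋯ + μ (a-1)`. -/
def off (μ : ℕ → ℕ) (a : ℕ) : ℕ := ∑ b ∈ Finset.range a, μ b

/-- A family `t i j r` (the coefficient of `u^{-r}` in `t_{ij}(u)`, with 0-based
indices `i j < d`) satisfying the defining RTT relations of the super Yangian
`Y(gl_{M|N})` with parity sequence `p`; the super Yangian itself, via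
`t_{i+1,j+1}^{(r)} = t i j r`, is the universal such family. -/
structure RTT (A : Type*) [Ring A] [Algebra ℂ A] (d : ℕ) (p : ℕ → ZMod 2) where
  t : ℕ → ℕ → ℕ → A
  t_zero : ∀ i j, t i j 0 = if i = j then (1 : A) else 0
  rtt : ∀ i j h k r s : ℕ, i < d → j < d → h < d → k < d →
    scomm (sgn ((p i + p j) * (p h + p k))) (t i j r) (t h k s) =
      sgn (p i * p j + p i * p h + p j * p h) •
        ∑ g ∈ Finset.range (min r s),
          (t h j g * t i k (r + s - 1 - g) - t h j (r + s - 1 - g) * t i k g)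


/-!
Fix `i, j < L`. For `x = t_{ij}^{(n)}`, the entrywise supercommutator `Y ↦ [x, Y]` on matrices
is `Y ↦ x Y - D Y D x`, with `D` the diagonal matrix of the signs `(-1)^{(|i|+|j|)|u|}`; since
`D² = 1` it is a twisted derivation, so applying it to `T(u) T'(u) = 1` expresses the commutator
with `T'(u)` as `-(D T' D) [x, T] T'`. Subtracting the RTT relations for `(n+1, s)` and
`(n, s+1)`, the commutator of `T(u)` with `u⁻¹ t_{ij}^{(n+1)} - t_{ij}^{(n)}` is, up to a global
sign, `u⁻¹ D (N E_{ji} T - T E_{ji} N)` with `N = (t_{uv}^{(n)})`. Hence the commutator of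
`T'(u)` with that element is `u⁻¹ D (T' N E_{ji} - E_{ji} N T')` up to sign, whose `(a, c)`
entry vanishes as soon as `a ≠ j` and `c ≠ i`, in particular for `a, c ≥ L`. Comparing
coefficients gives `[t_{ij}^{(n+1)}, t'^{(s)}_{ac}] = [t_{ij}^{(n)}, t'^{(s+1)}_{ac}]`, and
induction on `n`, starting from `t_{ij}^{(0)} = δ_{ij}`, shows that all of these vanish.
-/

theorem sgn_add (x y : ZMod 2) : sgn (x + y) = sgn x * sgn y := by
  have h01 : ∀ w : ZMod 2, w = 0 ∨ w = 1 := by decide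
  obtain rfl | rfl := h01 x <;> obtain rfl | rfl := h01 y <;>
    simp [sgn, show (1 : ZMod 2) + 1 = 0 by decide]

theorem sgn_mul_self (x : ZMod 2) : sgn x * sgn x = 1 := by
  rw [← sgn_add, CharTwo.add_self_eq_zero]
  simp [sgn]

section TwistedCommutator

variable {R : Type*} [Ring R] {D : R}

/-- For a diagonal sign matrix `D` and a scalar matrix `c`, the entries of `twistComm D c y` are
the supercommutators `[c, y_{uv}]` with sign `D_u D_v`. -/
def twistComm (D c y : R) : R := c * y - D * y * D * c

theorem twistComm_mul (hD : D * D = 1) (c y z : R) :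
    twistComm D c (y * z) = twistComm D c y * z + D * y * D * twistComm D c z := by
  simp only [twistComm, mul_sub, sub_mul, mul_assoc]
  rw [← mul_assoc D D, hD, one_mul]
  abel

theorem twistComm_one (hD : D * D = 1) (c : R) : twistComm D c 1 = 0 := by
  simp [twistComm, hD]

theorem twistComm_inv {y y' : R} (hD : D * D = 1) (h : y * y' = 1) (h' : y' * y = 1) (c : R) :
    twistComm D c y' = -(D * y' * D * twistComm D c y * y') := by
  have hprod := twistComm_mul hD c y y'
  rw [h, twistComm_one hD] at hprod
  have hcancel : D * y' * D * (D * y * D) = 1 := by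
    simp only [mul_assoc]
    rw [← mul_assoc D D, hD, one_mul, ← mul_assoc y' y, h', one_mul, hD]
  calc twistComm D c y' = D * y' * D * (D * y * D) * twistComm D c y' := by rw [hcancel, one_mul]
    _ = D * y' * D * (twistComm D c y * y' + D * y * D * twistComm D c y') -
          D * y' * D * twistComm D c y * y' := by noncomm_ring
    _ = _ := by rw [← hprod, mul_zero, zero_sub]

end TwistedCommutator

section SignDiagonal

open Matrix

variable {R n : Type*} [Ring R] [Fintype n] [DecidableEq n]

theorem mul_single_one_mul_apply (M N : Matrix n n R) (i j u v : n) :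
    (M * single j i (1 : R) * N) u v = M u j * N i v := by
  simp [Matrix.mul_apply, Matrix.single_apply, ite_and, ite_mul]

theorem twistComm_apply_eq_zero_of_inv {δ : n → R} {T T' N c : Matrix n n R} {z : R}
    (hD : diagonal δ * diagonal δ = 1) (hT : T * T' = 1) (hT' : T' * T = 1)
    (hz : ∀ r, Commute z r) {i j a b : n} (haj : a ≠ j) (hbi : b ≠ i)
    (h : twistComm (diagonal δ) c T =
      scalar n z * diagonal δ * (N * single j i 1 * T - T * single j i 1 * N)) :
    twistComm (diagonal δ) c T' a b = 0 := by
  set D := diagonal δ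
  set E : Matrix n n R := single j i 1
  have hZ : ∀ M, Commute (scalar n z) M := scalar_commute z hz
  have hT'T : ∀ M, T' * (T * M) = M := fun M => by rw [← mul_assoc, hT', one_mul]
  have hsandwich : T' * (N * E * T - T * E * N) * T' = T' * N * E - E * (N * T') := by
    simp only [mul_sub, sub_mul, mul_assoc, hT, hT'T, mul_one]
  have hrewrite : D * T' * D * (scalar n z * D * (N * E * T - T * E * N)) * T' =
      scalar n z * (D * (T' * N * E - E * (N * T'))) := by
    rw [← hsandwich, mul_assoc (scalar n z), ← mul_assoc, ← (hZ _).eq]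
    simp only [mul_assoc]
    rw [← mul_assoc D D, hD, one_mul]
  rw [twistComm_inv hD hT hT', h, hrewrite]
  simp [D, E, diagonal_mul, haj, hbi]

variable [Algebra ℂ R]

def signDiagonal (σ : n → ℂ) : Matrix n n R := diagonal fun u => algebraMap ℂ R (σ u)

theorem signDiagonal_mul_self {σ : n → ℂ} (hσ : ∀ u, σ u * σ u = 1) :
    (signDiagonal σ : Matrix n n R) * signDiagonal σ = 1 := by
  simp [signDiagonal, ← map_mul, hσ]

theorem twistComm_signDiagonal_scalar_apply (σ : n → ℂ) (y : R) (M : Matrix n n R) (u v : n) :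
    twistComm (signDiagonal σ) (scalar n y) M u v = scomm (σ u * σ v) y (M u v) := by
  simp only [twistComm, scomm, signDiagonal, scalar_apply, Matrix.sub_apply, diagonal_mul,
    mul_diagonal, ← Algebra.smul_def, ← Algebra.commutes, smul_mul_assoc, mul_smul_comm,
    smul_smul]

end SignDiagonal

section Series

open PowerSeries

variable [Ring A]

/-- `T(u)` as a matrix over `A⟦X⟧`, with `X = u⁻¹`. -/
def seriesMatrix (d : ℕ) (t : ℕ → ℕ → ℕ → A) : Matrix (Fin d) (Fin d) A⟦X⟧ :=
  Matrix.of fun u v => mk (t u v)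

theorem seriesMatrix_mul_eq_one {d : ℕ} {t t' : ℕ → ℕ → ℕ → A}
    (h : ∀ i j r : ℕ, i < d → j < d →
      ∑ g ∈ Finset.range d, ∑ e ∈ Finset.range (r + 1), t i g e * t' g j (r - e) =
        if i = j ∧ r = 0 then 1 else 0) :
    seriesMatrix d t * seriesMatrix d t' = 1 := by
  ext u v r
  rw [Matrix.mul_apply, map_sum, Matrix.one_apply]
  simp only [seriesMatrix, Matrix.of_apply, coeff_mul, coeff_mk,
    Finset.Nat.sum_antidiagonal_eq_sum_range_succ_mk]
  rw [Fin.sum_univ_eq_sum_range (fun g => ∑ e ∈ Finset.range (r + 1), t u g e * t' g v (r - e)),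
    h u v r u.2 v.2]
  by_cases huv : u = v <;> by_cases hr : r = 0 <;> simp [coeff_one, huv, hr, Fin.val_inj]

variable [Algebra ℂ A]

theorem scomm_X_mul_sub (ε : ℂ) (x y f : A⟦X⟧) :
    scomm ε (X * x - y) f = X * scomm ε x f - scomm ε y f := by
  have hX : f * (X * x) = X * (f * x) := by rw [← mul_assoc, (commute_X f).eq, mul_assoc]
  simp only [scomm, sub_mul, mul_sub, smul_sub, mul_assoc, hX, mul_smul_comm]
  abel

theorem coeff_scomm_C (ε : ℂ) (x : A) (f : A⟦X⟧) (n : ℕ) :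
    coeff n (scomm ε (C x) f) = scomm ε x (coeff n f) := by
  simp [scomm, coeff_C_mul, coeff_mul_C]

end Series

namespace RTT

open PowerSeries Matrix

variable [Ring A] [Algebra ℂ A] {d : ℕ} {p : ℕ → ZMod 2} (S : RTT A d p)

theorem scomm_t_zero_right (θ : ZMod 2) (x : A) (u v : ℕ) :
    scomm (sgn (θ * (p u + p v))) x (S.t u v 0) = 0 := by
  rw [S.t_zero]
  split_ifs with h
  · subst h
    simp [scomm, CharTwo.add_self_eq_zero, sgn]
  · simp [scomm]

theorem scomm_t_zero_left (θ : ZMod 2) (i j : ℕ) (y : A) :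
    scomm (sgn ((p i + p j) * θ)) (S.t i j 0) y = 0 := by
  rw [S.t_zero]
  split_ifs with h
  · subst h
    simp [scomm, CharTwo.add_self_eq_zero, sgn]
  · simp [scomm]

theorem scomm_succ_sub_scomm_succ {i j u v : ℕ} (hi : i < d) (hj : j < d) (hu : u < d)
    (hv : v < d) (n s : ℕ) :
    scomm (sgn ((p i + p j) * (p u + p v))) (S.t i j (n + 1)) (S.t u v s) -
        scomm (sgn ((p i + p j) * (p u + p v))) (S.t i j n) (S.t u v (s + 1)) =
      sgn (p i * p j + p i * p u + p j * p u) •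
        (S.t u j n * S.t i v s - S.t u j s * S.t i v n) := by
  rw [S.rtt i j u v (n + 1) s hi hj hu hv, S.rtt i j u v n (s + 1) hi hj hu hv, ← smul_sub]
  congr 1
  have harg : ∀ g, n + 1 + s - 1 - g = n + s - g := fun g => by omega
  have harg' : ∀ g, n + (s + 1) - 1 - g = n + s - g := fun g => by omega
  simp only [harg, harg']
  rcases lt_trichotomy n s with h | rfl | h
  · rw [min_eq_left (by omega : n + 1 ≤ s), min_eq_left (by omega : n ≤ s + 1),
      Finset.sum_range_succ, add_sub_cancel_left, (by omega : n + s - n = s)]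
  · rw [min_eq_right (by omega : n ≤ n + 1), min_eq_left (by omega : n ≤ n + 1), sub_self,
      sub_self]
  · rw [min_eq_right (by omega : s ≤ n + 1), min_eq_right (by omega : s + 1 ≤ n),
      Finset.sum_range_succ, ← sub_sub, sub_self, zero_sub, neg_sub, (by omega : n + s - s = n)]

theorem scomm_X_mul_C_sub_C_mk {i j u v : ℕ} (hi : i < d) (hj : j < d) (hu : u < d)
    (hv : v < d) (n : ℕ) :
    scomm (sgn ((p i + p j) * (p u + p v))) (X * C (S.t i j (n + 1)) - C (S.t i j n))
        (PowerSeries.mk (S.t u v)) =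
      X * sgn (p i * p j + p i * p u + p j * p u) •
        (C (S.t u j n) * PowerSeries.mk (S.t i v) - PowerSeries.mk (S.t u j) * C (S.t i v n)) := by
  ext s
  rw [scomm_X_mul_sub]
  cases s with
  | zero =>
    rw [map_sub, coeff_zero_X_mul, coeff_zero_X_mul, coeff_scomm_C, coeff_mk,
      scomm_t_zero_right, sub_zero]
  | succ s =>
    rw [map_sub, coeff_succ_X_mul, coeff_succ_X_mul, coeff_scomm_C, coeff_scomm_C, coeff_mk,
      coeff_mk, S.scomm_succ_sub_scomm_succ hi hj hu hv]
    simp [coeff_C_mul, coeff_mul_C]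

theorem twistComm_seriesMatrix {i j : ℕ} (hi : i < d) (hj : j < d) (n : ℕ) :
    twistComm (signDiagonal fun u : Fin d => sgn ((p i + p j) * p u))
        (scalar (Fin d) (X * C (S.t i j (n + 1)) - C (S.t i j n))) (seriesMatrix d S.t) =
      scalar (Fin d) (sgn (p i * p j) • X) *
        signDiagonal (fun u : Fin d => sgn ((p i + p j) * p u)) *
        (of (fun u v : Fin d => C (S.t u v n)) * single ⟨j, hj⟩ ⟨i, hi⟩ 1 *
            seriesMatrix d S.t -
          seriesMatrix d S.t * single ⟨j, hj⟩ ⟨i, hi⟩ 1 *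
            of (fun u v : Fin d => C (S.t u v n))) := by
  refine Matrix.ext fun u v => ?_
  rw [twistComm_signDiagonal_scalar_apply, ← sgn_add, ← mul_add, seriesMatrix, of_apply,
    S.scomm_X_mul_C_sub_C_mk hi hj u.2 v.2]
  have hsgn : sgn (p i * p j + p i * p u + p j * p u) =
      sgn (p i * p j) * sgn ((p i + p j) * p u) := by
    rw [← sgn_add]
    ring_nf
  simp only [scalar_apply, signDiagonal, diagonal_mul_diagonal, diagonal_mul, Matrix.sub_apply,
    mul_single_one_mul_apply, of_apply]
  rw [hsgn, mul_smul, ← Algebra.commutes, mul_assoc, ← Algebra.smul_def]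
  simp only [smul_mul_assoc, mul_smul_comm]
  exact smul_comm _ _ _

theorem scomm_t_inv_eq_zero {t' : ℕ → ℕ → ℕ → A}
    (hT : seriesMatrix d S.t * seriesMatrix d t' = 1)
    (hT' : seriesMatrix d t' * seriesMatrix d S.t = 1)
    {i j a c : ℕ} (hi : i < d) (hj : j < d) (ha : a < d) (hc : c < d)
    (haj : a ≠ j) (hic : i ≠ c) (n s : ℕ) :
    scomm (sgn ((p i + p j) * (p a + p c))) (S.t i j n) (t' a c s) = 0 := by
  have shift : ∀ n s, scomm (sgn ((p i + p j) * (p a + p c))) (S.t i j (n + 1)) (t' a c s) =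
      scomm (sgn ((p i + p j) * (p a + p c))) (S.t i j n) (t' a c (s + 1)) := by
    intro n s
    have hac := twistComm_apply_eq_zero_of_inv
      (signDiagonal_mul_self fun u => sgn_mul_self _) hT hT'
      (fun r => (commute_X r).symm.smul_left _) (a := ⟨a, ha⟩) (b := ⟨c, hc⟩)
      (by simpa [Fin.ext_iff] using haj) (by simpa [Fin.ext_iff] using hic.symm)
      (S.twistComm_seriesMatrix hi hj n)
    rw [← signDiagonal, twistComm_signDiagonal_scalar_apply, ← sgn_add, ← mul_add,
      seriesMatrix, of_apply, scomm_X_mul_sub] at hac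
    have hcoeff := congrArg (coeff (s + 1)) hac
    rw [map_sub, coeff_succ_X_mul, coeff_scomm_C, coeff_scomm_C, coeff_mk, coeff_mk,
      map_zero] at hcoeff
    exact sub_eq_zero.mp hcoeff
  induction n generalizing s with
  | zero => exact S.scomm_t_zero_left _ i j _
  | succ n ih => rw [shift, ih]

end RTT

/-- In `Y_{p+q+M|q+N}(s₁s)` with `d = L + M + N`, `L = p + q`, the
(homogeneous) generators `t_{ij}^{(r)}` (`i, j ≤ L`, `r ≥ 1`) of the northwestern
corner subalgebra supercommute with the (homogeneous) generators
`t'_{L+i, L+j}^{(s)}` of `ψ_L(Y_{M|N}(s))`, where `t'` are the entries of `T(u)^{-1}`.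
Since all these generators are homogeneous, the two subalgebras they generate
supercommute. -/
theorem statement4 [Ring A] [Algebra ℂ A] {L m : ℕ} {p : ℕ → ZMod 2}
    (S : RTT A (L + m) p) (t' : ℕ → ℕ → ℕ → A)
    (hinv : ∀ i j r : ℕ, i < L + m → j < L + m →
      ∑ g ∈ Finset.range (L + m), ∑ e ∈ Finset.range (r + 1), S.t i g e * t' g j (r - e) =
        if i = j ∧ r = 0 then 1 else 0)
    (hinv' : ∀ i j r : ℕ, i < L + m → j < L + m →
      ∑ g ∈ Finset.range (L + m), ∑ e ∈ Finset.range (r + 1), t' i g e * S.t g j (r - e) =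
        if i = j ∧ r = 0 then 1 else 0) :
    ∀ i j h k r s : ℕ, i < L → j < L → h < m → k < m →
      scomm (sgn ((p i + p j) * (p (L + h) + p (L + k))))
        (S.t i j r) (t' (L + h) (L + k) s) = 0 := by
  intro i j h k r s hi hj hh hk
  exact S.scomm_t_inv_eq_zero (seriesMatrix_mul_eq_one hinv) (seriesMatrix_mul_eq_one hinv')
    (by omega) (by omega) (by omega) (by omega) (by omega) (by omega) r s

end SuperYangian
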